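/- On the fermionic Fock space F, the extended Schubert derivations satisfy the commutation rule σ_-(w)σ_+(z) = (Σ_{k≥0}(z/w)^k) · σ_+(z)σ_-(w), i.e. σ_-(w)σ_+(z) = i_{w,z} (w/(w−z)) σ_+(z)σ_-(w), where i_{w,z} denotes expansion as a power series in z/w. Consequently σ̄_-(z)σ̄_+(w) = i_{z,w}(z/(z−w)) σ̄_+(w)σ̄_-(z). -/

import Mathlib

open ExteriorAlgebra

noncomputable section

/-- `M = ⊕_{i∈ℤ} ℤ bᵢ`. -/
abbrev M : Type := ℤ →₀ ℤ
def b (i : ℤ) : M := Finsupp.single i 1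
abbrev A : Type := ExteriorAlgebra ℤ M

/-- `[M]`, the free ℤ-module on the symbols `[b]_m`, `m ∈ ℤ`. -/
abbrev V : Type := ℤ →₀ ℤ
def v (m : ℤ) : V := Finsupp.single m 1

/-- The `⋀M`-submodule of relations: generated by `b_m ⊗ [b]_{m−1} − 1 ⊗ [b]_m`
and `b_m ⊗ [b]_m`. -/
def W : Submodule A (TensorProduct ℤ A V) :=
  Submodule.span A {x | ∃ m : ℤ,
    x = (ι ℤ (b m)) ⊗ₜ[ℤ] v (m - 1) - (1 : A) ⊗ₜ[ℤ] v m ∨ x = (ι ℤ (b m)) ⊗ₜ[ℤ] v m}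

/-- The fermionic Fock space `F = (⋀M ⊗ [M]) / W`; the class of `u ⊗ [b]_m`
is the wedge `u ∧ [b]_m`, realized as the scalar action `u • -` of `⋀M`. -/
abbrev F : Type := TensorProduct ℤ A V ⧸ W

/-- `[b]_m ∈ F`. -/
def bb (m : ℤ) : F := Submodule.Quotient.mk ((1 : A) ⊗ₜ[ℤ] v m)

/-- `b^r_{m+λ} = b_{m+λ₁} ∧ b_{m−1+λ₂} ∧ ⋯ ∧ b_{m−r+1+λ_r} ∈ ⋀^r M` (0-indexed `λ`). -/
def wb (m : ℤ) (r : ℕ) (lam : Fin r → ℕ) : A :=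
  (List.ofFn fun k : Fin r => ι ℤ (b (m - ((k : ℕ) : ℤ) + ((lam k : ℕ) : ℤ)))).prod

/-- `[b]_{m+λ} = b^r_{m+λ} ∧ [b]_{m−r} ∈ F`. -/
def bbp (m : ℤ) (r : ℕ) (lam : Fin r → ℕ) : F := wb m r lam • bb (m - r)

/-- The charge-`n` Fock space `F_n = ⊕_{λ∈𝒫} ℤ·[b]_{n+λ}`. -/
def Fm (n : ℤ) : Submodule ℤ F :=
  Submodule.span ℤ {x | ∃ (r : ℕ) (lam : Fin r → ℕ), Antitone lam ∧ x = bbp n r lam}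

/-- Hasse–Schmidt derivation on `⋀M`, coefficientwise. -/
def IsHS (D : ℕ → Module.End ℤ A) : Prop :=
  ∀ (n : ℕ) (u w : A), D n (u * w) = ∑ j ∈ Finset.range (n + 1), D j u * D (n - j) w

/-- `cF` extends `cA` multiplicatively from `⋀M` to the Fock space `F`:
`D(z)(u ∧ f) = D(z)u ∧ D(z)f`, coefficientwise. -/
def MultOver (cA : ℕ → Module.End ℤ A) (cF : ℕ → Module.End ℤ F) : Prop :=
  ∀ (n : ℕ) (u : A) (f : F), cF n (u • f) = ∑ j ∈ Finset.range (n + 1), cA j u • cF (n - j) f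

def IsSigmaPlus (c : ℕ → Module.End ℤ A) : Prop :=
  IsHS c ∧ c 0 = 1 ∧ ∀ (n : ℕ) (j : ℤ), c n (ι ℤ (b j)) = ι ℤ (b (j + n))

def IsSigmaMinus (c : ℕ → Module.End ℤ A) : Prop :=
  IsHS c ∧ c 0 = 1 ∧ ∀ (n : ℕ) (j : ℤ), c n (ι ℤ (b j)) = ι ℤ (b (j - n))

def IsSigmaBarPlus (c : ℕ → Module.End ℤ A) : Prop :=
  IsHS c ∧ c 0 = 1 ∧ (∀ j : ℤ, c 1 (ι ℤ (b j)) = -(ι ℤ (b (j + 1)))) ∧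
    ∀ n : ℕ, 2 ≤ n → ∀ j : ℤ, c n (ι ℤ (b j)) = 0

def IsSigmaBarMinus (c : ℕ → Module.End ℤ A) : Prop :=
  IsHS c ∧ c 0 = 1 ∧ (∀ j : ℤ, c 1 (ι ℤ (b j)) = -(ι ℤ (b (j - 1)))) ∧
    ∀ n : ℕ, 2 ≤ n → ∀ j : ℤ, c n (ι ℤ (b j)) = 0

/-!
Both `σ₋` and `σ̄₋` fix every vacuum `[b]_k`, so by multiplicativity they act on `u ∧ [b]_m`
through `⋀M` alone; there they commute with `σ₊` (resp. `σ̄₊`), since Hasse–Schmidt derivations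
that commute on the generators `b_j` commute everywhere by the Leibniz rule. Expanding
`σ₋(w)σ₊(z)(u ∧ [b]_m)` therefore leaves only the vacuum terms `σ_{-s}σ_r[b]_m`, which equal
`σ_{r-s}[b]_m` for `s ≤ r` and vanish otherwise; this index shift is the factor `Σ (z/w)^k`.
In the barred case the vacuum identity comes from `σ̄₋(w)b_j = b_j − w b_{j−1}` and
`b_m ∧ b_m = 0`.
-/

lemma mk_tmul_eq_smul_bb (u : A) (m : ℤ) :
    (Submodule.Quotient.mk (u ⊗ₜ[ℤ] v m) : F) = u • bb m := by
  rw [bb, ← Submodule.Quotient.mk_smul, TensorProduct.smul_tmul', smul_eq_mul, mul_one]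

lemma ι_smul_bb_sub_one (m : ℤ) : ι ℤ (b m) • bb (m - 1) = bb m := by
  rw [← mk_tmul_eq_smul_bb, bb, Submodule.Quotient.eq]
  exact Submodule.subset_span ⟨m, Or.inl rfl⟩

lemma ι_smul_bb_self (m : ℤ) : ι ℤ (b m) • bb m = 0 := by
  rw [← mk_tmul_eq_smul_bb, Submodule.Quotient.mk_eq_zero]
  exact Submodule.subset_span ⟨m, Or.inr rfl⟩

lemma ι_smul_bb_of_le {t m : ℤ} (h : t ≤ m) : ι ℤ (b t) • bb m = 0 := by
  induction m, h using Int.leInduction with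
  | base => exact ι_smul_bb_self t
  | succ n _ ih =>
    rw [← ι_smul_bb_sub_one (n + 1), add_sub_cancel_right, smul_smul,
      ← neg_eq_of_add_eq_zero_left (ι_add_mul_swap _ _), neg_smul, ← smul_smul, ih,
      smul_zero, neg_zero]

lemma F_ext {f g : Module.End ℤ F} (h : ∀ (u : A) (m : ℤ), f (u • bb m) = g (u • bb m)) :
    f = g := by
  suffices f ∘ₗ (W.mkQ.restrictScalars ℤ) = g ∘ₗ (W.mkQ.restrictScalars ℤ) from
    LinearMap.ext fun x => by
      obtain ⟨y, rfl⟩ := Submodule.Quotient.mk_surjective W x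
      exact LinearMap.congr_fun this y
  refine TensorProduct.ext' fun u w => ?_
  have : f ∘ₗ (W.mkQ.restrictScalars ℤ) ∘ₗ TensorProduct.mk ℤ A V u
      = g ∘ₗ (W.mkQ.restrictScalars ℤ) ∘ₗ TensorProduct.mk ℤ A V u :=
    Finsupp.basisSingleOne.ext fun i => by
      rw [Finsupp.coe_basisSingleOne]
      change f (Submodule.Quotient.mk (u ⊗ₜ[ℤ] v i)) = g (Submodule.Quotient.mk (u ⊗ₜ[ℤ] v i))
      rw [mk_tmul_eq_smul_bb]
      exact h u i
  exact LinearMap.congr_fun this w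

lemma bbp_zero (m : ℤ) (lam : Fin 0 → ℕ) : bbp m 0 lam = bb m := by
  simp [bbp, wb]

lemma bbp_one_succ (m : ℤ) (r : ℕ) :
    bbp m (r + 1) (fun _ => 1) = ι ℤ (b (m + 1)) • bbp (m - 1) r (fun _ => 1) := by
  have shift (k : ℕ) : m - ((k + 1 : ℕ) : ℤ) = m - 1 - k := by push_cast; ring
  simp only [bbp, wb, List.ofFn_succ, List.prod_cons, mul_smul, Fin.val_zero, Fin.val_succ,
    shift, Nat.cast_zero, sub_zero, Nat.cast_one]

lemma ι_smul_bbp_one_sub_one (m : ℤ) (r : ℕ) :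
    ι ℤ (b m) • bbp (m - 1) r (fun _ => 1) = if r = 0 then bb m else 0 := by
  rcases r with _ | r
  · rw [bbp_zero, ι_smul_bb_sub_one, if_pos rfl]
  · rw [bbp_one_succ, sub_add_cancel, smul_smul, ι_sq_zero, zero_smul, if_neg r.succ_ne_zero]

namespace IsHS

variable {D E : ℕ → Module.End ℤ A}

lemma apply_one (hD : IsHS D) (hD0 : D 0 = 1) (n : ℕ) : D n 1 = if n = 0 then 1 else 0 := by
  induction n using Nat.strong_induction_on with
  | _ n ih =>
    rcases n with _ | n
    · simp [hD0]
    have h := hD (n + 1) 1 1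
    rw [one_mul, Finset.sum_range_succ, Finset.sum_eq_single_of_mem 0 (by simp)
      (fun j hj hj0 => by rw [ih j (by simp at hj; omega), if_neg hj0, zero_mul])] at h
    simp only [Nat.sub_zero, Nat.sub_self, hD0, Module.End.one_apply, one_mul, mul_one,
      left_eq_add] at h
    simp [h]

lemma comm_of_comm_ι (hD : IsHS D) (hE : IsHS E) (hD0 : D 0 = 1) (hE0 : E 0 = 1)
    (hι : ∀ (a c : ℕ) (j : ℤ), D c (E a (ι ℤ (b j))) = E a (D c (ι ℤ (b j))))
    (a c : ℕ) (x : A) : D c (E a x) = E a (D c x) := by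
  induction x using ExteriorAlgebra.induction generalizing a c with
  | algebraMap r =>
    simp only [Algebra.algebraMap_eq_smul_one, map_zsmul, hE.apply_one hE0, hD.apply_one hD0,
      apply_ite, map_zero]
    split_ifs <;> rfl
  | ι x =>
    have : D c ∘ₗ E a ∘ₗ ι ℤ = E a ∘ₗ D c ∘ₗ ι ℤ :=
      Finsupp.basisSingleOne.ext fun j => by simpa [b] using hι a c j
    exact LinearMap.congr_fun this x
  | add x y hx hy => rw [map_add, map_add, map_add, map_add, hx, hy]
  | mul x y hx hy =>
    calc D c (E a (x * y))
        = ∑ j ∈ Finset.range (a + 1), ∑ i ∈ Finset.range (c + 1),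
            E j (D i x) * E (a - j) (D (c - i) y) := by
          simp only [hE a x y, map_sum, hD c, hx, hy]
      _ = E a (D c (x * y)) := by
          rw [hD c x y, map_sum, Finset.sum_comm]
          simp only [hE a]

end IsHS

lemma IsSigmaBarPlus.apply_ι {D : ℕ → Module.End ℤ A} (hD : IsSigmaBarPlus D) (n : ℕ) (j : ℤ) :
    D n (ι ℤ (b j)) =
      if n = 0 then ι ℤ (b j) else if n = 1 then -ι ℤ (b (j + 1)) else 0 := by
  obtain ⟨-, h0, h1, h2⟩ := hD
  rcases n with _ | _ | n <;> simp [h0, h1, h2]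

lemma IsSigmaBarMinus.apply_ι {D : ℕ → Module.End ℤ A} (hD : IsSigmaBarMinus D) (n : ℕ) (j : ℤ) :
    D n (ι ℤ (b j)) =
      if n = 0 then ι ℤ (b j) else if n = 1 then -ι ℤ (b (j - 1)) else 0 := by
  obtain ⟨-, h0, h1, h2⟩ := hD
  rcases n with _ | _ | n <;> simp [h0, h1, h2]

lemma IsSigmaMinus.comm_isSigmaPlus {sA smA : ℕ → Module.End ℤ A}
    (hsA : IsSigmaPlus sA) (hsmA : IsSigmaMinus smA) (i j : ℕ) (x : A) :
    smA i (sA j x) = sA j (smA i x) := by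
  refine hsmA.1.comm_of_comm_ι hsA.1 hsmA.2.1 hsA.2.1 (fun a c t => ?_) j i x
  rw [hsA.2.2, hsmA.2.2, hsmA.2.2, hsA.2.2, sub_add_eq_add_sub]

lemma IsSigmaBarMinus.comm_isSigmaBarPlus {sbpA sbmA : ℕ → Module.End ℤ A}
    (hsbpA : IsSigmaBarPlus sbpA) (hsbmA : IsSigmaBarMinus sbmA) (i j : ℕ) (x : A) :
    sbmA i (sbpA j x) = sbpA j (sbmA i x) := by
  refine hsbmA.1.comm_of_comm_ι hsbpA.1 hsbmA.2.1 hsbpA.2.1 (fun a c t => ?_) j i x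
  rw [hsbpA.apply_ι, hsbmA.apply_ι]
  split_ifs <;> simp [hsbpA.apply_ι, hsbmA.apply_ι, *]

def FixesVacuum (NF : ℕ → Module.End ℤ F) : Prop :=
  ∀ (n : ℕ) (k : ℤ), NF n (bb k) = if n = 0 then bb k else 0

lemma MultOver.apply_smul_bb {nA : ℕ → Module.End ℤ A} {NF : ℕ → Module.End ℤ F}
    (h : MultOver nA NF) (hvac : FixesVacuum NF)
    (n : ℕ) (u : A) (k : ℤ) : NF n (u • bb k) = nA n u • bb k := by
  rw [h n u (bb k), Finset.sum_eq_single_of_mem n (by simp)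
    (fun j hj hjn => by rw [hvac, if_neg (by simp at hj; omega), smul_zero]),
    Nat.sub_self, hvac, if_pos rfl]

lemma Finset.sum_range_sum_range_ite_le {β : Type*} [AddCommMonoid β] (a c : ℕ)
    (t : ℕ → ℕ → β) :
    ∑ j ∈ Finset.range (a + 1), ∑ k ∈ Finset.range (c + 1), (if k ≤ a - j then t j k else 0)
      = ∑ k ∈ Finset.range (min a c + 1), ∑ j ∈ Finset.range (a - k + 1), t j k := by
  simp_rw [← Finset.sum_filter]
  exact Finset.sum_comm' fun j k => by simp; omega

lemma MultOver.commutation_rule {pA nA : ℕ → Module.End ℤ A} {PF NF : ℕ → Module.End ℤ F}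
    (hP : MultOver pA PF) (hN : MultOver nA NF) (hvac : FixesVacuum NF)
    (hcomm : ∀ (i j : ℕ) (x : A), nA i (pA j x) = pA j (nA i x))
    (hPN : ∀ (s r : ℕ) (m : ℤ), NF s (PF r (bb m)) = if s ≤ r then PF (r - s) (bb m) else 0)
    (a c : ℕ) :
    NF c * PF a = ∑ k ∈ Finset.range (min a c + 1), PF (a - k) * NF (c - k) := by
  refine F_ext fun u m => ?_
  set t : ℕ → ℕ → F := fun j k => pA j (nA (c - k) u) • PF (a - k - j) (bb m)
  calc (NF c * PF a) (u • bb m)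
      = ∑ j ∈ Finset.range (a + 1), ∑ i ∈ Finset.range (c + 1),
          (if c - i ≤ a - j then t j (c - i) else 0) := by
        rw [Module.End.mul_apply, hP, map_sum]
        refine Finset.sum_congr rfl fun j _ => ?_
        rw [hN]
        refine Finset.sum_congr rfl fun i hi => ?_
        rw [hcomm, hPN]
        split_ifs
        · simp only [t, Nat.sub_sub_self (Finset.mem_range_succ_iff.mp hi), Nat.sub_right_comm]
        · exact smul_zero _
    _ = ∑ j ∈ Finset.range (a + 1), ∑ k ∈ Finset.range (c + 1),
          (if k ≤ a - j then t j k else 0) := by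
        refine Finset.sum_congr rfl fun j _ => ?_
        exact Finset.sum_range_reflect (fun k => if k ≤ a - j then t j k else 0) (c + 1)
    _ = _ := by
        rw [Finset.sum_range_sum_range_ite_le, LinearMap.sum_apply]
        refine Finset.sum_congr rfl fun k _ => ?_
        rw [Module.End.mul_apply, hN.apply_smul_bb hvac, hP]

lemma MultOver.zero_apply_smul {D : ℕ → Module.End ℤ A} {DF : ℕ → Module.End ℤ F}
    (hDF : MultOver D DF) (hD0 : D 0 = 1) (u : A) (f : F) : DF 0 (u • f) = u • DF 0 f := by
  simp [hDF 0, hD0]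

lemma IsSigmaBarMinus.multOver_ι_smul {D : ℕ → Module.End ℤ A} {DF : ℕ → Module.End ℤ F}
    (hD : IsSigmaBarMinus D) (hDF : MultOver D DF) (s : ℕ) (j : ℤ) (f : F) :
    DF (s + 1) (ι ℤ (b j) • f) = ι ℤ (b j) • DF (s + 1) f - ι ℤ (b (j - 1)) • DF s f := by
  rw [hDF, Finset.sum_range_succ', Finset.sum_range_succ',
    Finset.sum_eq_zero fun i _ => by rw [hD.apply_ι, if_neg (by omega), if_neg (by omega),
      zero_smul]]
  simp [hD.apply_ι, sub_eq_add_neg, add_comm]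

lemma IsSigmaBarMinus.apply_bbp_one {D : ℕ → Module.End ℤ A} {DF : ℕ → Module.End ℤ F}
    (hD : IsSigmaBarMinus D) (hDF : MultOver D DF) (hvac : FixesVacuum DF) (r s : ℕ) (m : ℤ) :
    DF s (bbp m r fun _ => 1) =
      if s ≤ r then ((-1 : ℤ) ^ s) • bbp m (r - s) (fun _ => 1) else 0 := by
  induction r generalizing s m with
  | zero => rcases s with _ | s <;> simp [bbp_zero, hvac _ m]
  | succ r ih =>
    rw [bbp_one_succ]
    rcases s with _ | s
    · simp [hDF.zero_apply_smul hD.2.1, ih, bbp_one_succ]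
    rw [hD.multOver_ι_smul hDF, ih, ih, smul_ite, smul_ite, smul_comm _ ((-1 : ℤ) ^ s),
      add_sub_cancel_right, ι_smul_bbp_one_sub_one, smul_zero, smul_zero, Nat.add_sub_add_right]
    obtain h | rfl | h := lt_trichotomy s r
    · rw [if_pos (Nat.succ_le_of_lt h), if_pos h.le, if_neg (by omega : r - s ≠ 0),
        if_pos (by omega : s + 1 ≤ r + 1), smul_zero, sub_zero, smul_comm, ← bbp_one_succ,
        Nat.sub_succ', Nat.sub_add_cancel (Nat.sub_pos_of_lt h)]
    · rw [Nat.sub_self, bbp_zero]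
      simp [pow_succ]
    · rw [if_neg (by omega), if_neg (by omega), if_neg (by omega), sub_zero]

lemma IsSigmaMinus.apply_sigmaPlus_bb {smA : ℕ → Module.End ℤ A} {sF smF : ℕ → Module.End ℤ F}
    (hsmA : IsSigmaMinus smA) (hmult : MultOver smA smF)
    (hsF : ∀ (n : ℕ) (k : ℤ), sF n (bb k) = ι ℤ (b (k + n)) • bb (k - 1))
    (hsmF : FixesVacuum smF) (s r : ℕ) (m : ℤ) :
    smF s (sF r (bb m)) = if s ≤ r then sF (r - s) (bb m) else 0 := by
  rw [hsF, hmult.apply_smul_bb hsmF, hsmA.2.2]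
  split_ifs with h
  · rw [hsF, Nat.cast_sub h, add_sub_assoc]
  · exact ι_smul_bb_of_le (by omega)

lemma IsSigmaBarMinus.apply_sigmaBarPlus_bb {sbmA : ℕ → Module.End ℤ A}
    {sbpF sbmF : ℕ → Module.End ℤ F} (hsbmA : IsSigmaBarMinus sbmA) (hmult : MultOver sbmA sbmF)
    (hsbpF : ∀ (n : ℕ) (k : ℤ), sbpF n (bb k) = ((-1 : ℤ) ^ n) • bbp k n fun _ => 1)
    (hsbmF : FixesVacuum sbmF) (s r : ℕ) (m : ℤ) :
    sbmF s (sbpF r (bb m)) = if s ≤ r then sbpF (r - s) (bb m) else 0 := by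
  rw [hsbpF, map_zsmul, hsbmA.apply_bbp_one hmult hsbmF, smul_ite, smul_zero]
  split_ifs with h
  · rw [hsbpF, smul_smul, ← pow_sub_mul_pow (-1) h, mul_assoc, ← pow_add,
      Even.neg_one_pow ⟨s, rfl⟩, mul_one]
  · rfl

/-- Commutation rules on the Fock space:
`σ₋(w)σ₊(z) = i_{w,z}(w/(w−z)) σ₊(z)σ₋(w)` and
`σ̄₋(z)σ̄₊(w) = i_{z,w}(z/(z−w)) σ̄₊(w)σ̄₋(z)`, stated coefficientwise: the coefficient
of `z^a w^{−c}` (resp. `z^{−c} w^a`) of the right-hand side is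
`∑_{k=0}^{min a c} σ_{a−k} σ_{−(c−k)}` (resp. the barred analogue). -/
theorem stmt19
    (sA sbpA smA sbmA : ℕ → Module.End ℤ A)
    (hsA : IsSigmaPlus sA) (hsbpA : IsSigmaBarPlus sbpA)
    (hsmA : IsSigmaMinus smA) (hsbmA : IsSigmaBarMinus sbmA)
    (sF sbpF smF sbmF : ℕ → Module.End ℤ F)
    (h₁ : MultOver sA sF) (h₂ : MultOver sbpA sbpF)
    (h₃ : MultOver smA smF) (h₄ : MultOver sbmA sbmF)
    (hsF : ∀ (n : ℕ) (k : ℤ), sF n (bb k) = ι ℤ (b (k + n)) • bb (k - 1))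
    (hsbpF : ∀ (n : ℕ) (k : ℤ), sbpF n (bb k) = ((-1 : ℤ) ^ n) • bbp k n fun _ => 1)
    (hsmF : ∀ (n : ℕ) (k : ℤ), smF n (bb k) = if n = 0 then bb k else 0)
    (hsbmF : ∀ (n : ℕ) (k : ℤ), sbmF n (bb k) = if n = 0 then bb k else 0) :
    (∀ a c : ℕ, smF c * sF a =
      ∑ k ∈ Finset.range (min a c + 1), sF (a - k) * smF (c - k)) ∧
    (∀ a c : ℕ, sbmF c * sbpF a =
      ∑ k ∈ Finset.range (min a c + 1), sbpF (a - k) * sbmF (c - k)) :=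
  ⟨h₁.commutation_rule h₃ hsmF (hsmA.comm_isSigmaPlus hsA)
      (hsmA.apply_sigmaPlus_bb h₃ hsF hsmF),
    h₂.commutation_rule h₄ hsbmF (hsbmA.comm_isSigmaBarPlus hsbpA)
      (hsbmA.apply_sigmaBarPlus_bb h₄ hsbpF hsbmF)⟩
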